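/- Being an inner skew brace is invariant under isoclinism: if skew braces B₁ and B₂ are isoclinic and B₁ is inner, then B₂ is inner. -/
import Mathlib


/-- A (right) skew brace: `(B, ·)` (the ambient group structure) and `(B, ∘)`
(given by `circ`, with unit `cone` and inverse `cinv`) are groups, related by
`((y · z) ∘ x) · x⁻¹ = ((y ∘ x) · x⁻¹) · ((z ∘ x) · x⁻¹)`. -/
structure RightSkewBrace (B : Type*) [Group B] where
  circ : B → B → B
  circ_assoc : ∀ x y z : B, circ (circ x y) z = circ x (circ y z)
  cone : B
  cone_circ : ∀ x : B, circ cone x = x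
  circ_cone : ∀ x : B, circ x cone = x
  cinv : B → B
  cinv_circ : ∀ x : B, circ (cinv x) x = cone
  circ_cinv : ∀ x : B, circ x (cinv x) = cone
  compat : ∀ x y z : B,
    circ (y * z) x * x⁻¹ = (circ y x * x⁻¹) * (circ z x * x⁻¹)

namespace RightSkewBrace

variable {B : Type*} [Group B]

/-- The gamma function: `γ(x)(y) = (y ∘ x) · x⁻¹`. -/
def gamma (S : RightSkewBrace B) (x y : B) : B := S.circ y x * x⁻¹

/-- The star commutator: `x * y = x⁻¹ · (x ∘ y) · y⁻¹`. -/
def star (S : RightSkewBrace B) (x y : B) : B := x⁻¹ * S.circ x y * y⁻¹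

/-- The commutator `[a, b] = a⁻¹ b⁻¹ a b` in the additive group `(B, ·)`. -/
def comm (a b : B) : B := a⁻¹ * b⁻¹ * a * b

/-- Membership in the annihilator `Ann(B) = Z(B,·) ∩ ker γ ∩ C_B(γ(B))`. -/
def inAnn (S : RightSkewBrace B) (c : B) : Prop :=
  (∀ x : B, c * x = x * c) ∧ (∀ y : B, S.gamma c y = y) ∧ (∀ y : B, S.gamma y c = c)

/-- Membership in `B' = [B,B] · [B, γ(B)]`, the subgroup of `(B,·)` generated by
all additive commutators and all star commutators. -/
def inDerived (S : RightSkewBrace B) (x : B) : Prop :=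
  x ∈ Subgroup.closure { z : B | ∃ a b : B, z = comm a b ∨ z = S.star a b }

/-- `B` is a bi-skew brace: `(B, ∘, ·)` is also a (right) skew brace, i.e. the
skew brace compatibility holds with the roles of the operations exchanged. -/
def IsBiSkew (S : RightSkewBrace B) : Prop :=
  ∀ x y z : B, S.circ (S.circ y z * x) (S.cinv x) =
    S.circ (S.circ (y * x) (S.cinv x)) (S.circ (z * x) (S.cinv x))

/-- `B` is λ-homomorphic: `γ : (B, ·) → Aut(B, ·)` is a homomorphism,
`γ(x·y) = γ(x)γ(y)` (apply `γ(x)` first, maps acting on the right). -/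
def IsLambdaHom (S : RightSkewBrace B) : Prop :=
  ∀ x y z : B, S.gamma (x * y) z = S.gamma y (S.gamma x z)

/-- `B` is inner: every `γ(y)` is an inner automorphism of `(B, ·)`. -/
def IsInner (S : RightSkewBrace B) : Prop :=
  ∀ y : B, ∃ t : B, ∀ x : B, S.gamma y x = t⁻¹ * x * t

end RightSkewBrace


namespace RightSkewBrace

variable {B : Type*} [Group B] (S : RightSkewBrace B)

lemma gamma_mul (x y z : B) : S.gamma x (y * z) = S.gamma x y * S.gamma x z :=
  S.compat x y z

lemma one_circ (x : B) : S.circ 1 x = x := by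
  have h := S.compat x 1 1
  rw [one_mul] at h
  have h2 : S.circ 1 x * x⁻¹ = 1 := left_eq_mul.mp h
  rw [mul_inv_eq_one] at h2
  exact h2

lemma cone_eq_one : S.cone = 1 := by
  have h1 := S.circ_cone 1
  rw [S.one_circ S.cone] at h1
  exact h1

lemma circ_one (x : B) : S.circ x 1 = x := by
  rw [← S.cone_eq_one]; exact S.circ_cone x

lemma gamma_one (y : B) : S.gamma 1 y = y := by
  simp [gamma, circ_one]

lemma gamma_one' (x : B) : S.gamma x 1 = 1 := by
  simp [gamma, one_circ]

lemma gamma_inv (x y : B) : S.gamma x y⁻¹ = (S.gamma x y)⁻¹ := by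
  have h : S.gamma x y⁻¹ * S.gamma x y = 1 := by
    rw [← S.gamma_mul, inv_mul_cancel, gamma_one']
  exact eq_inv_of_mul_eq_one_left h

lemma gamma_circ (a b y : B) : S.gamma (S.circ a b) y = S.gamma b (S.gamma a y) := by
  have h : S.gamma b (S.gamma a y) = S.gamma b (S.circ y a) * (S.gamma b a)⁻¹ := by
    rw [← S.gamma_inv, ← S.gamma_mul]; rfl
  rw [h]
  show S.circ y (S.circ a b) * (S.circ a b)⁻¹ =
    S.circ (S.circ y a) b * b⁻¹ * (S.circ a b * b⁻¹)⁻¹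
  rw [← S.circ_assoc]
  group

section Ann

variable {S} {a : B} (ha : S.inAnn a)
include ha

lemma circ_ann_left (y : B) : S.circ a y = a * y := by
  have h := ha.2.2 y
  rw [gamma] at h
  conv_rhs => rw [← h]
  simp

lemma cinv_ann : S.cinv a = a⁻¹ := by
  have h := S.circ_cinv a
  rw [circ_ann_left ha, S.cone_eq_one] at h
  exact eq_inv_of_mul_eq_one_right h

lemma gamma_ann_inv_left (y : B) : S.gamma a⁻¹ y = y := by
  have h1 : S.circ a a⁻¹ = 1 := by
    rw [← cinv_ann ha, S.circ_cinv, S.cone_eq_one]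
  have h2 := S.gamma_circ a a⁻¹ y
  rw [h1, S.gamma_one, ha.2.1 y] at h2
  exact h2.symm

lemma circ_ann_inv_right (y : B) : S.circ y a⁻¹ = y * a⁻¹ := by
  have h := gamma_ann_inv_left ha y
  rw [gamma] at h
  conv_rhs => rw [← h]
  simp

lemma gamma_ann_inv_right (y : B) : S.gamma y a⁻¹ = a⁻¹ := by
  rw [S.gamma_inv, ha.2.2 y]

end Ann

lemma star_eq (x y : B) : S.star x y = x⁻¹ * S.gamma y x := by
  rw [star, gamma, mul_assoc]

end RightSkewBrace

open RightSkewBrace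

/-- An isoclinism of skew braces, phrased on representatives: `xi` induces a
skew brace isomorphism `B₁/Ann(B₁) → B₂/Ann(B₂)`, `theta` restricts to a skew
brace isomorphism `B₁' → B₂'`, and the pair is compatible with the additive
commutator map and the star commutator map. -/
structure Isoclinism {B₁ B₂ : Type*} [Group B₁] [Group B₂]
    (S₁ : RightSkewBrace B₁) (S₂ : RightSkewBrace B₂) where
  xi : B₁ → B₂
  theta : B₁ → B₂
  xi_surj : ∀ u : B₂, ∃ x : B₁, S₂.inAnn (u⁻¹ * xi x)
  xi_inj : ∀ x y : B₁, S₂.inAnn ((xi x)⁻¹ * xi y) → S₁.inAnn (x⁻¹ * y)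
  xi_congr : ∀ x y : B₁, S₁.inAnn (x⁻¹ * y) → S₂.inAnn ((xi x)⁻¹ * xi y)
  xi_mul : ∀ x y : B₁, S₂.inAnn ((xi (x * y))⁻¹ * (xi x * xi y))
  xi_circ : ∀ x y : B₁, S₂.inAnn ((xi (S₁.circ x y))⁻¹ * S₂.circ (xi x) (xi y))
  theta_maps : ∀ x : B₁, S₁.inDerived x → S₂.inDerived (theta x)
  theta_mul : ∀ x y : B₁, S₁.inDerived x → S₁.inDerived y →
    theta (x * y) = theta x * theta y
  theta_circ : ∀ x y : B₁, S₁.inDerived x → S₁.inDerived y →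
    theta (S₁.circ x y) = S₂.circ (theta x) (theta y)
  theta_inj : ∀ x y : B₁, S₁.inDerived x → S₁.inDerived y → theta x = theta y → x = y
  theta_surj : ∀ u : B₂, S₂.inDerived u → ∃ x : B₁, S₁.inDerived x ∧ theta x = u
  comm_comm : ∀ x y : B₁, theta (comm x y) = comm (xi x) (xi y)
  star_comm : ∀ x y : B₁, theta (S₁.star x y) = S₂.star (xi x) (xi y)

/-- being inner is invariant under isoclinism. -/
theorem isInner_of_isoclinic {B₁ B₂ : Type*} [Group B₁] [Group B₂]
    (S₁ : RightSkewBrace B₁) (S₂ : RightSkewBrace B₂)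
    (e : Isoclinism S₁ S₂) (h : S₁.IsInner) : S₂.IsInner := by
  intro u
  obtain ⟨x₁, ha⟩ := e.xi_surj u
  obtain ⟨t, ht⟩ := h x₁
  refine ⟨e.xi t, fun x => ?_⟩
  obtain ⟨z, hb⟩ := e.xi_surj x
  -- γ₂(u) = γ₂(ξ x₁)
  have hu : u = S₂.circ (e.xi x₁) (u⁻¹ * e.xi x₁)⁻¹ := by
    rw [circ_ann_inv_right ha]; group
  have hg1 : ∀ y, S₂.gamma u y = S₂.gamma (e.xi x₁) y := by
    intro y
    conv_lhs => rw [hu]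
    rw [S₂.gamma_circ, gamma_ann_inv_left ha]
  -- the key computation on ξ z
  have h1 : S₁.star z x₁ = RightSkewBrace.comm z t := by
    rw [S₁.star_eq, ht z]
    simp only [RightSkewBrace.comm]
    group
  have h2 := e.star_comm z x₁
  rw [h1, e.comm_comm z t] at h2
  have key : S₂.gamma (e.xi x₁) (e.xi z) = (e.xi t)⁻¹ * e.xi z * e.xi t := by
    have h3 := h2.symm
    rw [S₂.star_eq] at h3
    simp only [RightSkewBrace.comm] at h3
    have h5 : S₂.gamma (e.xi x₁) (e.xi z) =
        e.xi z * ((e.xi z)⁻¹ * (e.xi t)⁻¹ * e.xi z * e.xi t) := by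
      rw [← h3]; group
    rw [h5]; group
  -- assemble
  have hx : x = e.xi z * (x⁻¹ * e.xi z)⁻¹ := by group
  have hcent : ∀ w : B₂, (x⁻¹ * e.xi z)⁻¹ * w = w * (x⁻¹ * e.xi z)⁻¹ := by
    intro w
    have h4 := hb.1 w
    calc (x⁻¹ * e.xi z)⁻¹ * w
        = (x⁻¹ * e.xi z)⁻¹ * (w * (x⁻¹ * e.xi z)) * (x⁻¹ * e.xi z)⁻¹ := by group
      _ = (x⁻¹ * e.xi z)⁻¹ * ((x⁻¹ * e.xi z) * w) * (x⁻¹ * e.xi z)⁻¹ := by rw [h4]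
      _ = w * (x⁻¹ * e.xi z)⁻¹ := by group
  rw [hg1]
  have hγx : S₂.gamma (e.xi x₁) x = S₂.gamma (e.xi x₁) (e.xi z) * (x⁻¹ * e.xi z)⁻¹ := by
    conv_lhs => rw [hx]
    rw [S₂.gamma_mul, gamma_ann_inv_right hb]
  rw [hγx, key, mul_assoc, mul_assoc, ← hcent (e.xi t)]
  group
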